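/- Let n ≥ 3 and e ∈ [0,1). For the regular n-gon, set δ = 1 + z/λ, where z = Σ_{j=1}^{n−1} (1 − cos 2θⱼ)/(2 d_{nj}³) and λ = (1/4) Σ_{j=1}^{n−1} csc(πj/n). Let η : [0,2π] → M₄(ℝ) solve η′(θ) = J₄ 𝓑₁(θ) η(θ), η(0) = I₄, where J₄ = [[0,−I₂],[I₂,0]] and 𝓑₁(θ) = [[I₂, −J₂],[J₂, I₂ − δ I₂/(1 + e cos θ)]]. Then η(2π) is hyperbolic, i.e. has no eigenvalue of modulus 1. (This is the subsystem of the linearized regular n-gon elliptic relative equilibrium corresponding to l = 1, and it implies that the regular n-gon elliptic relative equilibrium is spectrally unstable for every n ≥ 3 and every e ∈ [0,1).) -/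

import Mathlib

open Real Matrix

noncomputable section

/-- A real square matrix is hyperbolic if it has no eigenvalue of modulus `1`. -/
def IsHyperbolicMat {m : Type*} [Fintype m] [DecidableEq m] (M : Matrix m m ℝ) : Prop :=
  ∀ z : ℂ, z ∈ spectrum ℂ (M.map (Complex.ofReal : ℝ → ℂ)) → ‖z‖ ≠ 1

/-- `d_{nj} = 2 sin(πj/n)`. -/
def dnj (n j : ℕ) : ℝ := 2 * Real.sin (π * j / n)

/-- `z = ∑_{j=1}^{n-1} (1 - cos 2θⱼ)/(2 d_{nj}³)`, `θⱼ = 2πj/n`. -/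
def zval (n : ℕ) : ℝ :=
  ∑ j ∈ Finset.Icc 1 (n-1), (1 - Real.cos (2 * (2 * π * j / n))) / (2 * (dnj n j)^3)

/-- `λ = (1/4) ∑_{j=1}^{n-1} csc(πj/n)`. -/
def lamNgon (n : ℕ) : ℝ := (1/4) * ∑ j ∈ Finset.Icc 1 (n-1), 1 / Real.sin (π * j / n)

/-- `J₄ = [[0,-I₂],[I₂,0]]`. -/
def J4 : Matrix (Fin 2 ⊕ Fin 2) (Fin 2 ⊕ Fin 2) ℝ := Matrix.fromBlocks 0 (-1) 1 0

/-- The coefficient matrix `𝓑₁(θ) = [[I₂,-J₂],[J₂, I₂ - δI₂/(1+e cos θ)]]`. -/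
def B1mat (δ e θ : ℝ) : Matrix (Fin 2 ⊕ Fin 2) (Fin 2 ⊕ Fin 2) ℝ :=
  Matrix.fromBlocks 1 (-(!![0, -1; 1, 0] : Matrix (Fin 2) (Fin 2) ℝ))
    (!![0, -1; 1, 0] : Matrix (Fin 2) (Fin 2) ℝ)
    (1 - (δ / (1 + e * Real.cos θ)) • (1 : Matrix (Fin 2) (Fin 2) ℝ))

/-!
For a Floquet eigenvector `v` of `η(2π)` with multiplier `μ`, `x(θ) = η(θ) v` satisfies
`x(2π) = μ x(0)`. Writing `x = (p, q, r, s)` and `ω = ±i`, the rotating-frame combinations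
`y = e^{ωθ} (r + ω s)` and `Y = e^{ωθ} (p + ω q)` satisfy the scalar Hill equation
`y' = Y`, `Y' = (δ / (1 + e cos θ) - 1) y`, with the same multiplier `μ`.

For `1 < δ ≤ 3` the function `Re (ȳ Y) - φ |y|²`, `φ = (δ - 2) e sin θ / (1 + e cos θ)`, has
derivative at least `(δ - 1)(1 - e²) |y|² / (1 + e cos θ)²` (complete the square in `Y`;
the remainder is `(δ - 1)(3 - δ) e² sin²θ / (1 + e cos θ)²`). When `|μ| = 1` it takes the same
value at `0` and `2π`, so it is constant and `y` vanishes identically; hence `v = 0`.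

For the regular `n`-gon, the `j`-th term of `z` is `cos²(πj/n) / (2 sin(πj/n))`, which gives
`0 < z/λ ≤ 2`, i.e. `1 < δ ≤ 3`.
-/

open Set
open ComplexConjugate

theorem sin_pi_mul_div_pos {n j : ℕ} (hj : j ∈ Finset.Icc 1 (n - 1)) :
    0 < sin (π * j / n) := by
  rw [Finset.mem_Icc] at hj
  have hjn : (j : ℝ) < n := by exact_mod_cast (show j < n by omega)
  have hj0 : (0 : ℝ) < j := by exact_mod_cast hj.1
  have hn0 := hj0.trans hjn
  apply sin_pos_of_pos_of_lt_pi (by positivity)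
  rw [div_lt_iff₀ hn0]
  exact mul_lt_mul_of_pos_left hjn pi_pos

theorem zval_eq (n : ℕ) :
    zval n = ∑ j ∈ Finset.Icc 1 (n - 1), cos (π * j / n) ^ 2 / (2 * sin (π * j / n)) := by
  refine Finset.sum_congr rfl fun j hj ↦ ?_
  have hs := (sin_pi_mul_div_pos hj).ne'
  have harg : 2 * (2 * π * j / n) = 2 * (2 * (π * j / n)) := by ring
  rw [dnj, harg, cos_two_mul, cos_sq', sin_two_mul]
  field_simp
  ring

theorem lamNgon_pos {n : ℕ} (hn : 2 ≤ n) : 0 < lamNgon n :=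
  mul_pos (by norm_num) (Finset.sum_pos (fun j hj ↦ one_div_pos.2 (sin_pi_mul_div_pos hj))
    ⟨1, Finset.mem_Icc.2 ⟨le_rfl, by omega⟩⟩)

theorem zval_pos {n : ℕ} (hn : 3 ≤ n) : 0 < zval n := by
  have h1 : 1 ∈ Finset.Icc 1 (n - 1) := Finset.mem_Icc.2 ⟨le_rfl, by omega⟩
  rw [zval_eq]
  refine Finset.sum_pos' (fun j hj ↦ div_nonneg (sq_nonneg _)
    (mul_nonneg zero_le_two (sin_pi_mul_div_pos hj).le)) ⟨1, h1, ?_⟩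
  have hn2 : (2 : ℝ) < n := by exact_mod_cast hn
  have hcos : 0 < cos (π * (1 : ℕ) / n) := by
    rw [Nat.cast_one, mul_one]
    have hpos : 0 < π / n := div_pos pi_pos (by linarith)
    apply cos_pos_of_mem_Ioo ⟨by linarith [pi_pos], ?_⟩
    exact div_lt_div_of_pos_left pi_pos two_pos hn2
  exact div_pos (pow_pos hcos 2) (mul_pos two_pos (sin_pi_mul_div_pos h1))

theorem zval_le_two_mul_lamNgon (n : ℕ) : zval n ≤ 2 * lamNgon n := by
  rw [zval_eq, lamNgon, ← mul_assoc, Finset.mul_sum]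
  refine Finset.sum_le_sum fun j hj ↦ ?_
  have hs := sin_pi_mul_div_pos hj
  rw [div_le_iff₀ (by positivity)]
  field_simp
  nlinarith [cos_sq_le_one (π * j / n)]

theorem one_add_mul_cos_pos {e : ℝ} (he : |e| < 1) (t : ℝ) : 0 < 1 + e * cos t := by
  have h : |e * cos t| < 1 := by
    rw [abs_mul]
    exact (mul_le_of_le_one_right (abs_nonneg e) (abs_cos_le_one t)).trans_lt he
  linarith [neg_abs_le (e * cos t)]

def hillShear (δ e t : ℝ) : ℝ := (δ - 2) * e * sin t / (1 + e * cos t)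

def hillShearDeriv (δ e t : ℝ) : ℝ := (δ - 2) * e * (cos t + e) / (1 + e * cos t) ^ 2

theorem hasDerivAt_hillShear (δ : ℝ) {e : ℝ} (he : |e| < 1) (t : ℝ) :
    HasDerivAt (hillShear δ e) (hillShearDeriv δ e t) t := by
  have hu := (one_add_mul_cos_pos he t).ne'
  refine (((hasDerivAt_sin t).const_mul ((δ - 2) * e)).fun_div
    (((hasDerivAt_cos t).const_mul e).const_add 1) hu).congr_deriv ?_
  unfold hillShearDeriv
  congr 1
  linear_combination ((δ - 2) * e * e) * sin_sq_add_cos_sq t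

theorem hillShear_gap {δ e : ℝ} (hδ1 : 1 ≤ δ) (hδ3 : δ ≤ 3) (he : |e| < 1) (t : ℝ) :
    (δ - 1) * (1 - e ^ 2) / (1 + e * cos t) ^ 2 ≤
      δ / (1 + e * cos t) - 1 - hillShearDeriv δ e t - hillShear δ e t ^ 2 := by
  have hu := (one_add_mul_cos_pos he t).ne'
  have key : δ / (1 + e * cos t) - 1 - hillShearDeriv δ e t - hillShear δ e t ^ 2
        - (δ - 1) * (1 - e ^ 2) / (1 + e * cos t) ^ 2
      = (δ - 1) * (3 - δ) * (e * sin t) ^ 2 / (1 + e * cos t) ^ 2 := by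
    unfold hillShear hillShearDeriv
    field_simp
    linear_combination (-e ^ 2) * sin_sq_add_cos_sq t
  have : 0 ≤ (δ - 1) * (3 - δ) * (e * sin t) ^ 2 / (1 + e * cos t) ^ 2 :=
    div_nonneg (mul_nonneg (mul_nonneg (by linarith) (by linarith)) (sq_nonneg _)) (sq_nonneg _)
  linarith

def hillLyapunov (δ e : ℝ) (y Y : ℝ → ℂ) (t : ℝ) : ℝ :=
  (conj (y t) * Y t).re - hillShear δ e t * Complex.normSq (y t)

theorem hasDerivAt_hillLyapunov {δ e t : ℝ} (he : |e| < 1) {y Y : ℝ → ℂ}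
    (hy : HasDerivAt y (Y t) t)
    (hY : HasDerivAt Y ((δ / (1 + e * cos t) - 1 : ℝ) * y t) t) :
    HasDerivAt (hillLyapunov δ e y Y)
      (Complex.normSq (Y t) + (δ / (1 + e * cos t) - 1 - hillShearDeriv δ e t)
        * Complex.normSq (y t) - 2 * hillShear δ e t * (conj (y t) * Y t).re) t := by
  have hre : ∀ {f : ℝ → ℂ} {f' : ℂ}, HasDerivAt f f' t →
      HasDerivAt (fun s ↦ (f s).re) f'.re t :=
    fun h ↦ Complex.reCLM.hasFDerivAt.comp_hasDerivAt t h
  have hcross := hre (hy.star.fun_mul hY)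
  have hnorm := hre (hy.star.fun_mul hy)
  have hfun : hillLyapunov δ e y Y =
      fun s ↦ (star (y s) * Y s).re - hillShear δ e s * (star (y s) * y s).re := by
    funext s
    simp [hillLyapunov, Complex.normSq_apply, Complex.mul_re]
  rw [hfun]
  refine (hcross.fun_sub ((hasDerivAt_hillShear δ he t).fun_mul hnorm)).congr_deriv ?_
  simp only [Complex.normSq_apply, Complex.mul_re, Complex.add_re, Complex.star_def,
    Complex.conj_re, Complex.conj_im, Complex.ofReal_re, Complex.ofReal_im, Complex.mul_im]
  ring

theorem hillLyapunov_deriv_ge {δ e : ℝ} (hδ1 : 1 ≤ δ) (hδ3 : δ ≤ 3) (he : |e| < 1) (t : ℝ)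
    (a b : ℂ) :
    (δ - 1) * (1 - e ^ 2) / (1 + e * cos t) ^ 2 * Complex.normSq a ≤
      Complex.normSq b + (δ / (1 + e * cos t) - 1 - hillShearDeriv δ e t) * Complex.normSq a
        - 2 * hillShear δ e t * (conj a * b).re := by
  have hsq : Complex.normSq (b - hillShear δ e t * a) = Complex.normSq b
      - 2 * hillShear δ e t * (conj a * b).re + hillShear δ e t ^ 2 * Complex.normSq a := by
    simp only [Complex.normSq_apply, Complex.mul_re, Complex.conj_re, Complex.conj_im,
      Complex.sub_re, Complex.sub_im, Complex.mul_im, Complex.ofReal_re, Complex.ofReal_im]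
    ring
  nlinarith [Complex.normSq_nonneg (b - hillShear δ e t * a),
    mul_le_mul_of_nonneg_right (hillShear_gap hδ1 hδ3 he t) (Complex.normSq_nonneg a)]

theorem eq_zero_of_hasDerivAt_of_nonneg_of_le {G D : ℝ → ℝ} {a b : ℝ}
    (hG : ∀ t ∈ Icc a b, HasDerivAt G (D t) t) (hD : ∀ t ∈ Ioo a b, 0 ≤ D t)
    (hab : G b ≤ G a) : ∀ t ∈ Ioo a b, D t = 0 := by
  have hmono : MonotoneOn G (Icc a b) := by
    refine monotoneOn_of_hasDerivWithinAt_nonneg (f' := D) (convex_Icc a b)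
      (fun t ht ↦ (hG t ht).continuousAt.continuousWithinAt) (fun t ht ↦ ?_) (fun t ht ↦ ?_)
    · rw [interior_Icc] at ht ⊢
      exact (hG t (Ioo_subset_Icc_self ht)).hasDerivWithinAt
    · rw [interior_Icc] at ht
      exact hD t ht
  intro t ht
  have hconst : G =ᶠ[nhds t] fun _ ↦ G a := by
    filter_upwards [Ioo_mem_nhds ht.1 ht.2] with s hs
    have hsab := Ioo_subset_Icc_self hs
    have hab' : a ≤ b := hsab.1.trans hsab.2
    exact le_antisymm ((hmono hsab ⟨hab', le_rfl⟩ hsab.2).trans hab)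
      (hmono ⟨le_rfl, hab'⟩ hsab hsab.1)
  exact (hG t (Ioo_subset_Icc_self ht)).unique
    ((hasDerivAt_const t (G a)).congr_of_eventuallyEq hconst)

theorem hill_floquet_eq_zero {δ e : ℝ} (hδ1 : 1 < δ) (hδ3 : δ ≤ 3) (he : |e| < 1)
    {y Y : ℝ → ℂ} (hy : ∀ t ∈ Icc 0 (2 * π), HasDerivAt y (Y t) t)
    (hY : ∀ t ∈ Icc 0 (2 * π), HasDerivAt Y ((δ / (1 + e * cos t) - 1 : ℝ) * y t) t)
    {μ : ℂ} (hμ : ‖μ‖ = 1) (hy2π : y (2 * π) = μ * y 0) (hY2π : Y (2 * π) = μ * Y 0) :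
    y 0 = 0 ∧ Y 0 = 0 := by
  have h2π : (0 : ℝ) < 2 * π := by positivity
  have hperiodic : hillLyapunov δ e y Y (2 * π) = hillLyapunov δ e y Y 0 := by
    have hμ' : conj μ * μ = 1 := by
      rw [← Complex.normSq_eq_conj_mul_self, Complex.normSq_eq_norm_sq, hμ]; norm_num
    have hcross : conj (μ * y 0) * (μ * Y 0) = conj (y 0) * Y 0 := by
      rw [map_mul]; linear_combination (conj (y 0) * Y 0) * hμ'
    simp only [hillLyapunov, hillShear, hy2π, hY2π, hcross, sin_two_pi, sin_zero, mul_zero,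
      zero_div, zero_mul]
  have hgap : ∀ t, 0 < (δ - 1) * (1 - e ^ 2) / (1 + e * cos t) ^ 2 := fun t ↦
    div_pos (mul_pos (by linarith) (by nlinarith [sq_lt_one_iff_abs_lt_one e |>.mpr he]))
      (pow_pos (one_add_mul_cos_pos he t) 2)
  have hD := eq_zero_of_hasDerivAt_of_nonneg_of_le
    (fun t ht ↦ hasDerivAt_hillLyapunov he (hy t ht) (hY t ht))
    (fun t _ ↦ (mul_nonneg (hgap t).le (Complex.normSq_nonneg _)).trans
      (hillLyapunov_deriv_ge hδ1.le hδ3 he t (y t) (Y t))) hperiodic.le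
  have hy0 : EqOn y 0 (Ioo 0 (2 * π)) := by
    intro t ht
    have h := hillLyapunov_deriv_ge hδ1.le hδ3 he t (y t) (Y t)
    rw [hD t ht] at h
    exact Complex.normSq_eq_zero.mp (le_antisymm
      (nonpos_of_mul_nonpos_right h (hgap t)) (Complex.normSq_nonneg _))
  have hY0 : EqOn Y 0 (Ioo 0 (2 * π)) := by
    intro t ht
    have hloc : y =ᶠ[nhds t] fun _ ↦ 0 :=
      Filter.eventually_of_mem (Ioo_mem_nhds ht.1 ht.2) hy0
    exact (hy t (Ioo_subset_Icc_self ht)).unique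
      ((hasDerivAt_const t 0).congr_of_eventuallyEq hloc)
  have hext : ∀ {f : ℝ → ℂ}, (∀ t ∈ Icc 0 (2 * π), ContinuousAt f t) →
      EqOn f 0 (Ioo 0 (2 * π)) → f 0 = 0 := fun hf hf0 ↦
    hf0.of_subset_closure (fun t ht ↦ (hf t ht).continuousWithinAt) continuousOn_const
      Ioo_subset_Icc_self (by rw [closure_Ioo h2π.ne]) ⟨le_rfl, h2π.le⟩
  exact ⟨hext (fun t ht ↦ (hy t ht).continuousAt) hy0,
    hext (fun t ht ↦ (hY t ht).continuousAt) hY0⟩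

theorem hasDerivAt_map_ofReal_mulVec {ι : Type*} [Fintype ι] {η : ℝ → Matrix ι ι ℝ}
    {A : Matrix ι ι ℝ} {t : ℝ} (hη : ∀ i j, HasDerivAt (fun s ↦ η s i j) ((A * η t) i j) t)
    (v : ι → ℂ) :
    HasDerivAt (fun s ↦ (η s).map Complex.ofReal *ᵥ v)
      (A.map Complex.ofReal *ᵥ ((η t).map Complex.ofReal *ᵥ v)) t := by
  rw [hasDerivAt_pi]
  intro i
  have hmap : A.map Complex.ofReal * (η t).map Complex.ofReal = (A * η t).map Complex.ofReal :=
    (Matrix.map_mul (f := Complex.ofRealHom)).symm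
  rw [mulVec_mulVec, hmap]
  simp only [mulVec, dotProduct, map_apply]
  exact HasDerivAt.fun_sum fun j _ ↦ (hη i j).ofReal_comp.mul_const (v j)

theorem J4_mul_B1mat_mulVec (δ e t : ℝ) (x : Fin 2 ⊕ Fin 2 → ℂ) :
    let y := (J4 * B1mat δ e t).map Complex.ofReal *ᵥ x
    let k : ℂ := (δ / (1 + e * cos t) - 1 : ℝ)
    y (.inl 0) = x (.inl 1) + k * x (.inr 0) ∧ y (.inl 1) = -x (.inl 0) + k * x (.inr 1) ∧
      y (.inr 0) = x (.inl 0) + x (.inr 1) ∧ y (.inr 1) = x (.inl 1) - x (.inr 0) := by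
  simp [J4, B1mat, fromBlocks_multiply, mulVec, dotProduct, Fintype.sum_sum_type,
    Fin.sum_univ_two, ← sub_eq_add_neg]

theorem hasDerivAt_rotatingFrame {p q r s : ℝ → ℂ} {t : ℝ} {k ω : ℂ} (hω : ω ^ 2 = -1)
    (hp : HasDerivAt p (q t + k * r t) t) (hq : HasDerivAt q (-p t + k * s t) t)
    (hr : HasDerivAt r (p t + s t) t) (hs : HasDerivAt s (q t - r t) t) :
    HasDerivAt (fun u : ℝ ↦ Complex.exp (ω * u) * (r u + ω * s u))
        (Complex.exp (ω * t) * (p t + ω * q t)) t ∧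
      HasDerivAt (fun u : ℝ ↦ Complex.exp (ω * u) * (p u + ω * q u))
        (k * (Complex.exp (ω * t) * (r t + ω * s t))) t := by
  have hexp : HasDerivAt (fun u : ℝ ↦ Complex.exp (ω * u)) (Complex.exp (ω * t) * ω) t := by
    simpa using ((hasDerivAt_id t).ofReal_comp.const_mul ω).cexp
  constructor
  · refine (hexp.fun_mul (hr.fun_add (hs.const_mul ω))).congr_deriv ?_
    linear_combination (Complex.exp (ω * t) * s t) * hω
  · refine (hexp.fun_mul (hp.fun_add (hq.const_mul ω))).congr_deriv ?_
    linear_combination (Complex.exp (ω * t) * q t) * hω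

theorem B1mat_floquet_eq_zero {δ e : ℝ} (hδ1 : 1 < δ) (hδ3 : δ ≤ 3) (he : |e| < 1)
    {x : ℝ → Fin 2 ⊕ Fin 2 → ℂ}
    (hx : ∀ t ∈ Icc 0 (2 * π), HasDerivAt x ((J4 * B1mat δ e t).map Complex.ofReal *ᵥ x t) t)
    {μ : ℂ} (hμ : ‖μ‖ = 1) (hx2π : x (2 * π) = μ • x 0) : x 0 = 0 := by
  have hrot : ∀ ω : ℂ, ω ^ 2 = -1 → Complex.exp (ω * (2 * π : ℝ)) = 1 →
      x 0 (.inr 0) + ω * x 0 (.inr 1) = 0 ∧ x 0 (.inl 0) + ω * x 0 (.inl 1) = 0 := by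
    intro ω hω hexp
    have hhill := fun t (ht : t ∈ Icc 0 (2 * π)) ↦ by
      have hxk := hasDerivAt_pi.1 (hx t ht)
      obtain ⟨hp, hq, hr, hs⟩ := J4_mul_B1mat_mulVec δ e t (x t)
      exact hasDerivAt_rotatingFrame hω ((hxk _).congr_deriv hp) ((hxk _).congr_deriv hq)
        ((hxk _).congr_deriv hr) ((hxk _).congr_deriv hs)
    have h2π : ∀ k, x (2 * π) k = μ * x 0 k := fun k ↦ congrFun hx2π k
    have hexp0 : Complex.exp (ω * (0 : ℝ)) = 1 := by simp
    obtain ⟨hy0, hY0⟩ := hill_floquet_eq_zero hδ1 hδ3 he (fun t ht ↦ (hhill t ht).1)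
      (fun t ht ↦ (hhill t ht).2) hμ (by rw [h2π, h2π, hexp, hexp0]; ring)
      (by rw [h2π, h2π, hexp, hexp0]; ring)
    rw [hexp0, one_mul] at hy0 hY0
    exact ⟨hy0, hY0⟩
  obtain ⟨hrsI, hpqI⟩ := hrot Complex.I Complex.I_sq (by
    rw [mul_comm]; exact_mod_cast Complex.exp_two_pi_mul_I)
  obtain ⟨hrsI', hpqI'⟩ := hrot (-Complex.I) (by simp) (by
    rw [neg_mul, Complex.exp_neg, mul_comm]; push_cast; rw [Complex.exp_two_pi_mul_I, inv_one])
  funext k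
  rcases k with k | k <;> fin_cases k <;> simp only [Fin.zero_eta, Fin.mk_one, Pi.zero_apply]
  · linear_combination (hpqI + hpqI') / 2
  · linear_combination (-Complex.I / 2) * (hpqI - hpqI') + x 0 (.inl 1) * Complex.I_sq
  · linear_combination (hrsI + hrsI') / 2
  · linear_combination (-Complex.I / 2) * (hrsI - hrsI') + x 0 (.inr 1) * Complex.I_sq

theorem Matrix.exists_mulVec_eq_smul_of_mem_spectrum {K ι : Type*} [Field K] [Fintype ι]
    [DecidableEq ι] {M : Matrix ι ι K} {μ : K} (h : μ ∈ spectrum K M) :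
    ∃ v ≠ 0, M *ᵥ v = μ • v := by
  rw [← Matrix.spectrum_toLin', ← Module.End.hasEigenvalue_iff_mem_spectrum] at h
  obtain ⟨v, hv⟩ := h.exists_hasEigenvector
  exact ⟨v, hv.2, by simpa using Module.End.mem_eigenspace_iff.1 hv.1⟩

/-- for `n ≥ 3` and `e ∈ [0,1)`, the monodromy matrix `η(2π)` of the
subsystem `η′(θ) = J₄ 𝓑₁(θ) η(θ)`, `η(0) = I₄`, with `δ = 1 + z/λ`, is hyperbolic;
this subsystem (the `l = 1` part of the linearized regular `n`-gon ERE) being hyperbolic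
implies that the regular `n`-gon elliptic relative equilibrium is spectrally unstable. -/
theorem ngon_l1_subsystem_hyperbolic (n : ℕ) (hn : 3 ≤ n) (e : ℝ)
    (he0 : 0 ≤ e) (he1 : e < 1)
    (η : ℝ → Matrix (Fin 2 ⊕ Fin 2) (Fin 2 ⊕ Fin 2) ℝ)
    (hη0 : η 0 = 1)
    (hη : ∀ θ ∈ Set.Icc (0:ℝ) (2 * π), ∀ i j,
      HasDerivAt (fun t => η t i j)
        ((J4 * B1mat (1 + zval n / lamNgon n) e θ * η θ) i j) θ) :
    IsHyperbolicMat (η (2 * π)) := by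
  intro μ hμ hμ1
  have hlam := lamNgon_pos (by omega : 2 ≤ n)
  have hδ1 : 1 < 1 + zval n / lamNgon n := by linarith [div_pos (zval_pos hn) hlam]
  have hδ3 : 1 + zval n / lamNgon n ≤ 3 := by
    linarith [(div_le_iff₀ hlam).2 (zval_le_two_mul_lamNgon n)]
  have he : |e| < 1 := abs_lt.2 ⟨by linarith, he1⟩
  obtain ⟨v, hv0, hv⟩ := Matrix.exists_mulVec_eq_smul_of_mem_spectrum hμ
  have h0 : (η 0).map Complex.ofReal *ᵥ v = v := by simp [hη0]
  refine hv0 (h0 ▸ B1mat_floquet_eq_zero hδ1 hδ3 he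
    (x := fun t ↦ (η t).map Complex.ofReal *ᵥ v)
    (fun t ht ↦ hasDerivAt_map_ofReal_mulVec (hη t ht) v) hμ1 ?_)
  simp only [hv, h0]
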